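/- arXiv:cs/0611120 — 3 statements merged into one kernel-verified Lean document; each statement's English description precedes it below -/
import Mathlib

section
/- Let X and Y be independent exponentially distributed random variables with means a > 0 and b > 0, and define the instantaneous secrecy capacity C_s = max(0, log₂(1+X) − log₂(1+Y)). Then for every target secrecy rate R > 0, the outage probability P(C_s < R) equals 1 − (a / (a + 2^R · b)) · exp(−(2^R − 1)/a). -/
/-!
Since `X, Y ≥ 0` almost surely, the outage event is `X < 2^R Y + (2^R - 1)`. Given `Y = y`, its
complement has probability `exp(-(2^R y + 2^R - 1)/a)` by the exponential tail of `X`; averaging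
over `Y` evaluates the Laplace transform `E[exp(-s Y)] = (1/b)/(1/b + s)` at `s = 2^R/a`.
-/

open MeasureTheory ProbabilityTheory Real

namespace ProbabilityTheory

lemma expMeasure_eq_withDensity (r : ℝ) :
    expMeasure r = volume.withDensity (exponentialPDF r) := rfl

lemma expMeasure_Iio_zero (r : ℝ) : expMeasure r (Set.Iio 0) = 0 := by
  rw [expMeasure_eq_withDensity, withDensity_apply _ measurableSet_Iio,
    lintegral_exponentialPDF_of_nonpos le_rfl]

lemma ae_nonneg_expMeasure (r : ℝ) : ∀ᵐ x ∂expMeasure r, 0 ≤ x := by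
  rw [ae_iff]
  simp only [not_le]
  exact expMeasure_Iio_zero r

lemma expMeasure_Ici {r x : ℝ} (hr : 0 < r) (hx : 0 ≤ x) :
    expMeasure r (Set.Ici x) = ENNReal.ofReal (exp (-(r * x))) := by
  have := isProbabilityMeasure_expMeasure hr
  have hIio : expMeasure r (Set.Iio x) = expMeasure r (Set.Iic x) :=
    measure_congr ((withDensity_absolutelyContinuous _ _).ae_eq Iio_ae_eq_Iic)
  have hexp : exp (-(r * x)) ≤ 1 := exp_le_one_iff.2 (by nlinarith)
  rw [← Set.compl_Iio, prob_compl_eq_one_sub measurableSet_Iio, hIio, ← ofReal_cdf,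
    cdf_expMeasure_eq hr, if_pos hx, ← ENNReal.ofReal_one,
    ← ENNReal.ofReal_sub _ (sub_nonneg.2 hexp), sub_sub_cancel]

lemma measurable_exponentialPDF (r : ℝ) : Measurable (exponentialPDF r) :=
  (measurable_exponentialPDFReal r).ennreal_ofReal

lemma lintegral_exp_neg_mul_expMeasure {r s : ℝ} (hr : 0 < r) (hrs : 0 < r + s) :
    ∫⁻ y, ENNReal.ofReal (exp (-(s * y))) ∂expMeasure r = ENNReal.ofReal (r / (r + s)) := by
  have hpdf (y : ℝ) : exponentialPDF r y * ENNReal.ofReal (exp (-(s * y)))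
      = ENNReal.ofReal (r / (r + s)) * exponentialPDF (r + s) y := by
    rcases lt_or_ge y 0 with hy | hy
    · simp [exponentialPDF_of_neg hy]
    · rw [exponentialPDF_of_nonneg hy, exponentialPDF_of_nonneg hy,
        ← ENNReal.ofReal_mul (by positivity), ← ENNReal.ofReal_mul (by positivity), mul_assoc,
        ← exp_add, ← neg_add, ← add_mul]
      congr 1
      field_simp
  rw [expMeasure_eq_withDensity, lintegral_withDensity_eq_lintegral_mul _
    (measurable_exponentialPDF r) (by fun_prop)]
  simp only [Pi.mul_apply, hpdf]
  rw [lintegral_const_mul _ (measurable_exponentialPDF _),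
    lintegral_exponentialPDF_eq_one hrs, mul_one]

variable {Ω : Type*} [MeasurableSpace Ω] {μ : Measure Ω}

lemma IndepFun.measure_preimage_eq_lintegral {α β : Type*} [MeasurableSpace α]
    [MeasurableSpace β] [IsFiniteMeasure μ] {X : Ω → α} {Y : Ω → β} (hX : Measurable X)
    (hY : Measurable Y) (h : IndepFun X Y μ) {s : Set (β × α)} (hs : MeasurableSet s) :
    μ {ω | (Y ω, X ω) ∈ s} = ∫⁻ y, μ.map X (Prod.mk y ⁻¹' s) ∂μ.map Y := by
  rw [← Measure.prod_apply hs,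
    ← (indepFun_iff_map_prod_eq_prod_map_map hY.aemeasurable hX.aemeasurable).1 h.symm,
    Measure.map_apply (hY.prodMk hX) hs]
  rfl

lemma measure_mul_add_le_of_indepFun_expMeasure [IsProbabilityMeasure μ] {X Y : Ω → ℝ}
    {p q t c : ℝ} (hp : 0 < p) (hq : 0 < q) (ht : 0 ≤ t) (hc : 0 ≤ c) (hXm : Measurable X)
    (hYm : Measurable Y) (hindep : IndepFun X Y μ) (hX : μ.map X = expMeasure p)
    (hY : μ.map Y = expMeasure q) :
    μ {ω | t * Y ω + c ≤ X ω} = ENNReal.ofReal (exp (-(p * c)) * (q / (q + p * t))) := by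
  have hs : MeasurableSet {z : ℝ × ℝ | t * z.1 + c ≤ z.2} :=
    measurableSet_le (by fun_prop) measurable_snd
  calc μ {ω | t * Y ω + c ≤ X ω}
      = ∫⁻ y, expMeasure p (Set.Ici (t * y + c)) ∂expMeasure q := by
        rw [← hX, ← hY]
        exact hindep.measure_preimage_eq_lintegral hXm hYm hs
    _ = ∫⁻ y, ENNReal.ofReal (exp (-(p * c))) * ENNReal.ofReal (exp (-(p * t * y)))
          ∂expMeasure q := by
        refine lintegral_congr_ae ((ae_nonneg_expMeasure q).mono fun y hy => ?_)
        dsimp only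
        rw [expMeasure_Ici hp (by positivity), ← ENNReal.ofReal_mul (exp_pos _).le, ← exp_add]
        congr 2
        ring
    _ = _ := by
        rw [lintegral_const_mul _ (by fun_prop),
          lintegral_exp_neg_mul_expMeasure hq (by positivity), ← ENNReal.ofReal_mul (exp_pos _).le]

end ProbabilityTheory

lemma max_zero_logb_sub_lt_iff {B x y R : ℝ} (hB : 1 < B) (hx : 0 < 1 + x) (hy : 0 < 1 + y)
    (hR : 0 < R) :
    max 0 (logb B (1 + x) - logb B (1 + y)) < R ↔ x < B ^ R * y + (B ^ R - 1) := by
  rw [max_lt_iff, and_iff_right hR, ← logb_div hx.ne' hy.ne',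
    logb_lt_iff_lt_rpow hB (div_pos hx hy), div_lt_iff₀ hy]
  constructor <;> intro h <;> linarith

/-- Outage probability of the secrecy capacity (Theorem 1): for independent exponential
SNRs `X` (mean `a`) and `Y` (mean `b`), with secrecy capacity
`C_s = max 0 (log₂(1+X) - log₂(1+Y))`, and any target rate `R > 0`,
`P(C_s < R) = 1 - (a / (a + 2^R b)) exp(-(2^R - 1)/a)`. -/
theorem outage_probability
    {Ω : Type*} [MeasureSpace Ω] [IsProbabilityMeasure (ℙ : Measure Ω)]
    (X Y : Ω → ℝ) (a b R : ℝ) (ha : 0 < a) (hb : 0 < b) (hR : 0 < R)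
    (hXm : Measurable X) (hYm : Measurable Y)
    (hindep : IndepFun X Y ℙ)
    (hX : Measure.map X ℙ = expMeasure (1 / a))
    (hY : Measure.map Y ℙ = expMeasure (1 / b)) :
    ℙ {ω | max 0 (logb 2 (1 + X ω) - logb 2 (1 + Y ω)) < R}
      = ENNReal.ofReal
          (1 - a / (a + 2 ^ R * b) * Real.exp (-(2 ^ R - 1) / a)) := by
  have hXnn : ∀ᵐ ω ∂ℙ, 0 ≤ X ω := ae_of_ae_map hXm.aemeasurable (hX ▸ ae_nonneg_expMeasure _)
  have hYnn : ∀ᵐ ω ∂ℙ, 0 ≤ Y ω := ae_of_ae_map hYm.aemeasurable (hY ▸ ae_nonneg_expMeasure _)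
  have ht : 1 ≤ (2 : ℝ) ^ R := one_le_rpow one_le_two hR.le
  have houtage : {ω | max 0 (logb 2 (1 + X ω) - logb 2 (1 + Y ω)) < R}
      =ᵐ[ℙ] ({ω | 2 ^ R * Y ω + (2 ^ R - 1) ≤ X ω}ᶜ : Set Ω) := by
    refine Filter.eventuallyEq_set.2 ?_
    filter_upwards [hXnn, hYnn] with ω hx hy
    exact (max_zero_logb_sub_lt_iff one_lt_two (by linarith) (by linarith) hR).trans not_le.symm
  rw [measure_congr houtage, prob_compl_eq_one_sub (measurableSet_le (by fun_prop) hXm),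
    measure_mul_add_le_of_indepFun_expMeasure (one_div_pos.2 ha) (one_div_pos.2 hb)
      (by linarith) (by linarith) hXm hYm hindep hX hY,
    ← ENNReal.ofReal_one, ← ENNReal.ofReal_sub _ (by positivity)]
  congr 2
  rw [mul_comm]
  congr 1
  · field_simp
  · ring
end

section
/- Fix b > 0 and R > 0, and for a > 0 define f(a) = 1 − (a/(a + 2^R·b)) · exp(−(2^R − 1)/a). Then a·f(a) tends to 2^R·b + 2^R − 1 as a tends to infinity; in particular, the outage probability f(a) decays as 1/a for large a. -/
open Real Filter Topology

/-!
With `c = 2^R b` and `d = 2^R - 1` one has `a f(a) = a / (a + c) * (c + a (1 - exp (-d / a)))`.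
The first factor tends to `1`, and `a (1 - exp (-d / a))` is a difference quotient of
`t ↦ 1 - exp (-d t)` at `0` with step `1 / a`, so it tends to the derivative `d`.
-/

theorem tendsto_div_add_const_atTop {𝕜 : Type*} [Field 𝕜] [LinearOrder 𝕜] [IsStrictOrderedRing 𝕜]
    [TopologicalSpace 𝕜] [OrderTopology 𝕜] (c : 𝕜) :
    Tendsto (fun a : 𝕜 => a / (a + c)) atTop (𝓝 1) := by
  have h : Tendsto (fun a : 𝕜 => 1 - c / (a + c)) atTop (𝓝 (1 - 0)) :=
    tendsto_const_nhds.sub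
      (tendsto_const_nhds.div_atTop (tendsto_atTop_add_const_right _ c tendsto_id))
  rw [sub_zero] at h
  refine h.congr' ?_
  filter_upwards [eventually_gt_atTop (-c)] with a ha
  have : a + c ≠ 0 := by linarith
  field_simp
  ring

theorem HasDerivAt.tendsto_smul_sub_inv_atTop {E : Type*} [NormedAddCommGroup E] [NormedSpace ℝ E]
    {f : ℝ → E} {f' : E} (hf : HasDerivAt f f' 0) :
    Tendsto (fun a : ℝ => a • (f a⁻¹ - f 0)) atTop (𝓝 f') := by
  have h := (hasDerivAt_iff_tendsto_slope.mp hf).comp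
    (tendsto_inv_atTop_nhdsGT_zero.mono_right (nhdsGT_le_nhdsNE 0))
  simpa [Function.comp_def, slope_def_module] using h

theorem tendsto_mul_one_sub_exp_neg_div_atTop (d : ℝ) :
    Tendsto (fun a : ℝ => a * (1 - exp (-d / a))) atTop (𝓝 d) := by
  have hf : HasDerivAt (fun t => 1 - exp (-d * t)) d 0 := by
    simpa using (((hasDerivAt_id (0 : ℝ)).const_mul (-d)).exp).const_sub 1
  simpa [div_eq_mul_inv] using hf.tendsto_smul_sub_inv_atTop

theorem outage_probability_high_snr_general (b R : ℝ) :
    Tendsto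
      (fun a : ℝ => a * (1 - a / (a + 2 ^ R * b) * Real.exp (-(2 ^ R - 1) / a)))
      atTop (nhds (2 ^ R * b + 2 ^ R - 1)) := by
  set c : ℝ := 2 ^ R * b
  have h := (tendsto_div_add_const_atTop c).mul
    ((tendsto_mul_one_sub_exp_neg_div_atTop (2 ^ R - 1)).const_add c)
  rw [one_mul, ← add_sub_assoc] at h
  refine h.congr' ?_
  filter_upwards [eventually_gt_atTop (-c)] with a ha
  have : a + c ≠ 0 := by linarith
  field_simp
  ring

/-- High-SNR asymptotics of the outage probability: for fixed `b > 0` and `R > 0`, with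
`f a = 1 - (a/(a + 2^R b)) exp(-(2^R - 1)/a)`, we have
`a * f a → 2^R b + 2^R - 1` as `a → ∞`; in particular `f a` decays like `1/a`. -/
theorem outage_probability_high_snr (b R : ℝ) (hb : 0 < b) (hR : 0 < R) :
    Tendsto
      (fun a : ℝ => a * (1 - a / (a + 2 ^ R * b) * Real.exp (-(2 ^ R - 1) / a)))
      atTop (nhds (2 ^ R * b + 2 ^ R - 1)) :=
  outage_probability_high_snr_general b R
end

section
/- Let H₁, H₂, M₁, M₂ be independent real Gaussian random variables with mean 0 and variance 1/2, let D₁, D₂ be independent real Gaussian random variables with mean 0 and variance σ² > 0, with all six variables mutually independent, and let c_M > 0 and c_W > 0. Then P( c_W·((H₁+D₁)² + (H₂+D₂)²) < min( c_M·(M₁² + M₂²), c_W·(H₁² + H₂²) ) ) ≤ 1/2 − (1/2)·(1 + 2/σ²)^(−1/2). -/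
/-! An outage forces `γ̂_W < γ_W`, i.e. `2⟪δ_W, h_W⟫ + ‖δ_W‖² < 0`. Given `δ_W = d`, the inner
product `⟪d, h_W⟫` is a centred Gaussian of variance `‖d‖²/2`, so this event has probability
`P(Z < -‖d‖/2)` for `Z ~ N(0, 1/2)` independent of `δ_W`. Integrating over `Z` first instead,
`P(‖δ_W‖ < -2Z) = 1 - exp(-2Z²/σ²)` on `Z < 0` (polar coordinates), and the remaining
one-dimensional Gaussian integral is `1/2 - (1/2)(1 + 2/σ²)^(-1/2)`. -/

open MeasureTheory ProbabilityTheory Real Set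
open scoped NNReal

lemma ProbabilityTheory.IndepFun.map_prodMk_eq_prod {Ω α β : Type*} [MeasurableSpace Ω]
    [MeasurableSpace α] [MeasurableSpace β] {P : Measure Ω} [IsFiniteMeasure P] {X : Ω → α}
    {Y : Ω → β} {μ : Measure α} {ν : Measure β} (hXY : IndepFun X Y P) (hX : AEMeasurable X P)
    (hY : AEMeasurable Y P) (hμ : P.map X = μ) (hν : P.map Y = ν) :
    P.map (fun ω ↦ (X ω, Y ω)) = μ.prod ν := by
  rw [hXY.map_prod_eq_prod_map_map hX hY, hμ, hν]

lemma gaussianReal_prod_map_linearCombination (m₁ m₂ a b : ℝ) (v₁ v₂ : ℝ≥0) :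
    ((gaussianReal m₁ v₁).prod (gaussianReal m₂ v₂)).map (fun p ↦ a * p.1 + b * p.2)
      = gaussianReal (a * m₁ + b * m₂)
          (NNReal.mk (a ^ 2) (sq_nonneg a) * v₁ + NNReal.mk (b ^ 2) (sq_nonneg b) * v₂) := by
  rw [← gaussianReal_conv_gaussianReal, ← gaussianReal_map_const_mul,
    ← gaussianReal_map_const_mul, Measure.conv,
    Measure.map_prod_map _ _ (by fun_prop) (by fun_prop), Measure.map_map (by fun_prop) (by fun_prop)]
  rfl

lemma gaussianReal_Iio_const_mul {c : ℝ} (hc : 0 < c) (v : ℝ≥0) (t : ℝ) :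
    gaussianReal 0 (NNReal.mk (c ^ 2) (sq_nonneg c) * v) (Iio (c * t))
      = gaussianReal 0 v (Iio t) := by
  have hmap := gaussianReal_map_const_mul (μ := 0) (v := v) c
  rw [mul_zero] at hmap
  rw [← hmap, Measure.map_apply (by fun_prop) measurableSet_Iio]
  congr 1
  ext x
  simp [mul_lt_mul_iff_right₀ hc]

lemma gaussianReal_prod_halfPlane_le (w : ℝ≥0) (d : ℝ × ℝ) :
    ((gaussianReal 0 w).prod (gaussianReal 0 w))
        {h | 2 * (d.1 * h.1 + d.2 * h.2) + (d.1 ^ 2 + d.2 ^ 2) < 0}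
      ≤ gaussianReal 0 w (Iio (-√(d.1 ^ 2 + d.2 ^ 2) / 2)) := by
  rcases eq_or_ne d 0 with rfl | hd
  · simp
  set r := √(d.1 ^ 2 + d.2 ^ 2)
  have hr : 0 < r := by
    refine sqrt_pos.2 ?_
    rcases d with ⟨a, b⟩
    have : a ≠ 0 ∨ b ≠ 0 := by contrapose! hd; simp [hd]
    rcases this with h | h <;> positivity
  have hr2 : r ^ 2 = d.1 ^ 2 + d.2 ^ 2 := sq_sqrt (by positivity)
  have hset : {h : ℝ × ℝ | 2 * (d.1 * h.1 + d.2 * h.2) + (d.1 ^ 2 + d.2 ^ 2) < 0}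
      = (fun h ↦ (2 * d.1) * h.1 + (2 * d.2) * h.2) ⁻¹' Iio ((2 * r) * (-r / 2)) := by
    ext h
    simp only [mem_ofPred_eq, mem_preimage, mem_Iio]
    constructor <;> intro _ <;> nlinarith
  have hvar : NNReal.mk ((2 * d.1) ^ 2) (sq_nonneg _) * w
        + NNReal.mk ((2 * d.2) ^ 2) (sq_nonneg _) * w
      = NNReal.mk ((2 * r) ^ 2) (sq_nonneg _) * w := by
    ext
    simp only [NNReal.coe_add, NNReal.coe_mul, NNReal.coe_mk]
    linear_combination (-4 * (w : ℝ)) * hr2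
  rw [hset, ← Measure.map_apply (by fun_prop) measurableSet_Iio,
    gaussianReal_prod_map_linearCombination, mul_zero, mul_zero, add_zero, hvar,
    gaussianReal_Iio_const_mul (by positivity)]

lemma integral_mul_exp_neg_sq_div {v : ℝ} (hv : v ≠ 0) (R : ℝ) :
    ∫ r in (0 : ℝ)..R, r * exp (-r ^ 2 / (2 * v)) = v * (1 - exp (-R ^ 2 / (2 * v))) := by
  have hderiv : ∀ x ∈ uIcc 0 R,
      HasDerivAt (fun r ↦ -v * exp (-r ^ 2 / (2 * v))) (x * exp (-x ^ 2 / (2 * v))) x := by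
    intro x _
    have hsq : HasDerivAt (fun r ↦ -r ^ 2 / (2 * v)) (-(2 * x) / (2 * v)) x := by
      simpa using (hasDerivAt_pow 2 x).neg.div_const (2 * v)
    refine (hsq.exp.const_mul (-v)).congr_deriv ?_
    field_simp
  rw [intervalIntegral.integral_eq_sub_of_hasDerivAt hderiv
    ((by fun_prop : Continuous fun r : ℝ ↦ r * exp (-r ^ 2 / (2 * v))).intervalIntegrable _ _)]
  simp only [ne_eq, OfNat.ofNat_ne_zero, not_false_eq_true, zero_pow, neg_zero, zero_div, exp_zero]
  ring

lemma gaussianReal_prod_eq_withDensity {v : ℝ≥0} (hv : v ≠ 0) :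
    (gaussianReal 0 v).prod (gaussianReal 0 v) = volume.withDensity fun p : ℝ × ℝ ↦
      ENNReal.ofReal ((2 * π * v)⁻¹ * exp (-(p.1 ^ 2 + p.2 ^ 2) / (2 * v))) := by
  rw [gaussianReal_of_var_ne_zero 0 hv,
    prod_withDensity (measurable_gaussianPDF _ _) (measurable_gaussianPDF _ _),
    ← Measure.volume_eq_prod]
  congr with p
  rw [gaussianPDF, gaussianPDF, ← ENNReal.ofReal_mul (gaussianPDFReal_nonneg _ _ _),
    gaussianPDFReal, gaussianPDFReal, mul_mul_mul_comm, ← mul_inv,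
    mul_self_sqrt (by positivity), ← exp_add]
  congr 3
  ring

lemma gaussianReal_prod_setOf_sq_add_sq_lt {v : ℝ≥0} (hv : v ≠ 0) {R : ℝ} (hR : 0 < R) :
    ((gaussianReal 0 v).prod (gaussianReal 0 v)) {p | p.1 ^ 2 + p.2 ^ 2 < R ^ 2}
      = ENNReal.ofReal (1 - exp (-R ^ 2 / (2 * v))) := by
  set g : ℝ → ℝ := fun r ↦ r * ((2 * π * v)⁻¹ * exp (-r ^ 2 / (2 * v)))
  have hdisk : MeasurableSet {p : ℝ × ℝ | p.1 ^ 2 + p.2 ^ 2 < R ^ 2} :=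
    measurableSet_lt (by fun_prop) measurable_const
  have hpolar : ∀ p ∈ polarCoord.target, ENNReal.ofReal p.1 •
      {p : ℝ × ℝ | p.1 ^ 2 + p.2 ^ 2 < R ^ 2}.indicator (fun p : ℝ × ℝ ↦ ENNReal.ofReal
        ((2 * π * v)⁻¹ * exp (-(p.1 ^ 2 + p.2 ^ 2) / (2 * v)))) (polarCoord.symm p)
      = (Iio R).indicator (fun r ↦ ENNReal.ofReal (g r)) p.1 * 1 := by
    rintro ⟨r, θ⟩ ⟨hr, -⟩
    have hsq : (r * cos θ) ^ 2 + (r * sin θ) ^ 2 = r ^ 2 := by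
      linear_combination r ^ 2 * sin_sq_add_cos_sq θ
    have hmem : r ^ 2 < R ^ 2 ↔ r < R := pow_lt_pow_iff_left₀ hr.le hR.le two_ne_zero
    simp only [polarCoord_symm_apply, indicator, mem_ofPred_eq, hsq, hmem, mem_Iio, g, mul_one]
    split_ifs
    · rw [smul_eq_mul, ← ENNReal.ofReal_mul hr.le]
    · simp
  have hg_int : IntegrableOn g (Ioo 0 R) :=
    (by fun_prop : Continuous g).integrableOn_Icc.mono_set Ioo_subset_Icc_self
  have hg_nonneg : ∀ r ∈ Ioo 0 R, 0 ≤ g r := fun r hr ↦ by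
    have := hr.1
    positivity
  rw [gaussianReal_prod_eq_withDensity hv, withDensity_apply _ hdisk,
    ← lintegral_indicator hdisk, ← lintegral_comp_polarCoord_symm,
    setLIntegral_congr_fun polarCoord.open_target.measurableSet hpolar, polarCoord_target,
    Measure.volume_eq_prod, ← Measure.prod_restrict, lintegral_prod_mul (g := fun _ ↦ 1)
      ((Measurable.indicator (by fun_prop) measurableSet_Iio).aemeasurable) aemeasurable_const,
    setLIntegral_one, lintegral_indicator measurableSet_Iio,
    Measure.restrict_restrict measurableSet_Iio, Iio_inter_Ioi,
    ← ofReal_integral_eq_lintegral_ofReal hg_int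
      (ae_restrict_of_forall_mem measurableSet_Ioo hg_nonneg),
    ← integral_Ioc_eq_integral_Ioo, ← intervalIntegral.integral_of_le hR.le]
  simp_rw [g, mul_left_comm _ (2 * π * v)⁻¹]
  rw [intervalIntegral.integral_const_mul, integral_mul_exp_neg_sq_div (by positivity),
    volume_Ioo, ← ENNReal.ofReal_mul' (by linarith [pi_pos])]
  congr 1
  field_simp
  ring

lemma gaussianReal_prod_setOf_lt_neg_sqrt {v : ℝ≥0} (hv : v ≠ 0) (z : ℝ) :
    ((gaussianReal 0 v).prod (gaussianReal 0 v)) {d | z < -√(d.1 ^ 2 + d.2 ^ 2) / 2}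
      = (Iio 0).indicator (fun z ↦ ENNReal.ofReal (1 - exp (-(2 / v) * z ^ 2))) z := by
  rcases lt_or_ge z 0 with hz | hz
  · have hdisk : {d : ℝ × ℝ | z < -√(d.1 ^ 2 + d.2 ^ 2) / 2}
        = {p | p.1 ^ 2 + p.2 ^ 2 < (-2 * z) ^ 2} := by
      ext d
      rw [mem_ofPred_eq, mem_ofPred_eq, ← sqrt_lt' (by linarith)]
      constructor <;> intro <;> linarith
    rw [hdisk, gaussianReal_prod_setOf_sq_add_sq_lt hv (by linarith),
      indicator_of_mem (mem_Iio.2 hz)]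
    congr 3
    field_simp
  · have hempty : {d : ℝ × ℝ | z < -√(d.1 ^ 2 + d.2 ^ 2) / 2} = ∅ :=
      eq_empty_of_forall_notMem fun d hd ↦ by
        have := sqrt_nonneg (d.1 ^ 2 + d.2 ^ 2)
        rw [mem_ofPred_eq] at hd
        linarith
    simp [hempty, hz]

lemma integral_gaussian_Iio (b : ℝ) : ∫ x in Iio (0 : ℝ), exp (-b * x ^ 2) = √(π / b) / 2 := by
  rw [setIntegral_congr_set Iio_ae_eq_Iic, ← integral_gaussian_Ioi, ← neg_zero,
    ← integral_comp_neg_Iic]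
  simp

lemma gaussianPDFReal_zero_mul_exp_neg_mul_sq (w : ℝ≥0) (a z : ℝ) :
    gaussianPDFReal 0 w z * exp (-a * z ^ 2)
      = (√(2 * π * w))⁻¹ * exp (-((2 * (w : ℝ))⁻¹ + a) * z ^ 2) := by
  rw [gaussianPDFReal, mul_assoc, ← exp_add]
  congr 2
  ring

lemma integral_Iio_gaussianPDFReal_mul_exp_neg_mul_sq {w : ℝ≥0} (hw : w ≠ 0) {a : ℝ}
    (ha : 0 ≤ a) :
    ∫ z in Iio 0, gaussianPDFReal 0 w z * exp (-a * z ^ 2) = 1 / (2 * √(1 + 2 * a * w)) := by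
  have hw' : (0 : ℝ) < w := by positivity
  simp_rw [gaussianPDFReal_zero_mul_exp_neg_mul_sq]
  rw [integral_const_mul, integral_gaussian_Iio,
    show π / ((2 * (w : ℝ))⁻¹ + a) = (2 * π * w) / (1 + 2 * a * w) by field_simp,
    sqrt_div' _ (by positivity)]
  field_simp

lemma setLIntegral_Iio_one_sub_exp_neg_mul_sq_gaussianReal {w : ℝ≥0} (hw : w ≠ 0) {a : ℝ}
    (ha : 0 ≤ a) :
    ∫⁻ z in Iio 0, ENNReal.ofReal (1 - exp (-a * z ^ 2)) ∂gaussianReal 0 w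
      = ENNReal.ofReal (1 / 2 - 1 / (2 * √(1 + 2 * a * w))) := by
  set F : ℝ → ℝ → ℝ := fun b z ↦ gaussianPDFReal 0 w z * exp (-b * z ^ 2)
  have hF_int : ∀ b, 0 ≤ b → Integrable (F b) := fun b hb ↦ by
    simp_rw [F, gaussianPDFReal_zero_mul_exp_neg_mul_sq]
    exact (integrable_exp_neg_mul_sq (by positivity)).const_mul _
  have hF_le : ∀ z, F a z ≤ F 0 z := fun z ↦ by
    refine mul_le_mul_of_nonneg_left (exp_le_exp.2 ?_) (gaussianPDFReal_nonneg _ _ _)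
    nlinarith [sq_nonneg z]
  have hdensity : ∀ z, (gaussianPDF 0 w * fun z ↦ ENNReal.ofReal (1 - exp (-a * z ^ 2))) z
      = ENNReal.ofReal (F 0 z - F a z) := fun z ↦ by
    simp only [Pi.mul_apply, gaussianPDF, F, neg_zero, zero_mul, exp_zero, mul_one,
      ← ENNReal.ofReal_mul (gaussianPDFReal_nonneg _ _ _), mul_sub]
  have hint : IntegrableOn (fun z ↦ F 0 z - F a z) (Iio 0) :=
    ((hF_int 0 le_rfl).sub (hF_int a ha)).integrableOn
  rw [gaussianReal_of_var_ne_zero 0 hw, setLIntegral_withDensity_eq_setLIntegral_mul _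
    (measurable_gaussianPDF _ _) (by fun_prop) measurableSet_Iio]
  simp_rw [hdensity]
  rw [← ofReal_integral_eq_lintegral_ofReal hint (ae_of_all _ fun z ↦ sub_nonneg.2 (hF_le z)),
    integral_sub (hF_int 0 le_rfl).integrableOn (hF_int a ha).integrableOn,
    integral_Iio_gaussianPDFReal_mul_exp_neg_mul_sq hw le_rfl,
    integral_Iio_gaussianPDFReal_mul_exp_neg_mul_sq hw ha]
  simp

theorem secrecy_outage_probability_upper_bound_general
    {Ω : Type*} [MeasureSpace Ω] [IsProbabilityMeasure (ℙ : Measure Ω)]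
    (H₁ H₂ M₁ M₂ D₁ D₂ : Ω → ℝ) (v : ℝ≥0) (hv : 0 < v) (cM cW : ℝ)
    (hcW : 0 < cW)
    (hH₁ : Measurable H₁) (hH₂ : Measurable H₂)
    (hM₁ : Measurable M₁) (hM₂ : Measurable M₂)
    (hD₁ : Measurable D₁) (hD₂ : Measurable D₂)
    (hindep : iIndepFun ![H₁, H₂, M₁, M₂, D₁, D₂] ℙ)
    (hH₁d : Measure.map H₁ ℙ = gaussianReal 0 (1 / 2))
    (hH₂d : Measure.map H₂ ℙ = gaussianReal 0 (1 / 2))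
    (hD₁d : Measure.map D₁ ℙ = gaussianReal 0 v)
    (hD₂d : Measure.map D₂ ℙ = gaussianReal 0 v) :
    ℙ {ω | cW * ((H₁ ω + D₁ ω) ^ 2 + (H₂ ω + D₂ ω) ^ 2)
            < min (cM * (M₁ ω ^ 2 + M₂ ω ^ 2)) (cW * (H₁ ω ^ 2 + H₂ ω ^ 2))}
      ≤ ENNReal.ofReal
          (1 / 2 - 1 / 2 * (1 + 2 / (v : ℝ)) ^ (-(1 : ℝ) / 2)) := by
  set μD := (gaussianReal 0 v).prod (gaussianReal 0 v)
  set ν := gaussianReal 0 (1 / 2 : ℝ≥0)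
  have hmeas : ∀ i, Measurable (![H₁, H₂, M₁, M₂, D₁, D₂] i) := by
    intro i
    fin_cases i <;> assumption
  have hlaw : Measure.map (fun ω ↦ ((D₁ ω, D₂ ω), (H₁ ω, H₂ ω))) ℙ = μD.prod (ν.prod ν) :=
    (hindep.indepFun_prodMk_prodMk hmeas 4 5 0 1 (by decide) (by decide) (by decide)
      (by decide)).map_prodMk_eq_prod (by fun_prop) (by fun_prop)
      ((hindep.indepFun (i := 4) (j := 5) (by decide)).map_prodMk_eq_prod hD₁.aemeasurable
        hD₂.aemeasurable hD₁d hD₂d)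
      ((hindep.indepFun (i := 0) (j := 1) (by decide)).map_prodMk_eq_prod hH₁.aemeasurable
        hH₂.aemeasurable hH₁d hH₂d)
  set S := {q : (ℝ × ℝ) × (ℝ × ℝ) |
    2 * (q.1.1 * q.2.1 + q.1.2 * q.2.2) + (q.1.1 ^ 2 + q.1.2 ^ 2) < 0}
  set T := {q : (ℝ × ℝ) × ℝ | q.2 < -√(q.1.1 ^ 2 + q.1.2 ^ 2) / 2}
  have hS : MeasurableSet S := measurableSet_lt (by fun_prop) measurable_const
  have hT : MeasurableSet T := measurableSet_lt (by fun_prop) (by fun_prop)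
  calc _ ≤ ℙ ((fun ω ↦ ((D₁ ω, D₂ ω), (H₁ ω, H₂ ω))) ⁻¹' S) := measure_mono fun ω hω ↦ by
          have := (mul_lt_mul_iff_right₀ hcW).1 (hω.trans_le (min_le_right _ _))
          simp only [S, mem_preimage, mem_ofPred_eq]
          linarith
    _ = μD.prod (ν.prod ν) S := by rw [← hlaw, Measure.map_apply (by fun_prop) hS]
    _ = ∫⁻ d, ν.prod ν (Prod.mk d ⁻¹' S) ∂μD := Measure.prod_apply hS
    _ ≤ ∫⁻ d, ν (Iio (-√(d.1 ^ 2 + d.2 ^ 2) / 2)) ∂μD :=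
          lintegral_mono fun d ↦ gaussianReal_prod_halfPlane_le _ d
    _ = μD.prod ν T := (Measure.prod_apply hT).symm
    _ = ∫⁻ z, μD ((fun d ↦ (d, z)) ⁻¹' T) ∂ν := Measure.prod_apply_symm hT
    _ = ∫⁻ z in Iio 0, ENNReal.ofReal (1 - exp (-(2 / v) * z ^ 2)) ∂ν := by
          rw [← lintegral_indicator measurableSet_Iio]
          exact lintegral_congr fun z ↦ gaussianReal_prod_setOf_lt_neg_sqrt hv.ne' z
    _ = _ := by
          rw [setLIntegral_Iio_one_sub_exp_neg_mul_sq_gaussianReal (by norm_num) (by positivity),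
            show (-(1 : ℝ) / 2) = -(1 / 2) by norm_num, rpow_neg (by positivity), ← sqrt_eq_rpow]
          congr 2
          push_cast
          ring_nf

/-- Theorem 2 (secrecy outage under imperfect CSI): with `(M₁, M₂)` the main-channel
fading coefficient, `(H₁, H₂)` the eavesdropper fading coefficient (all independent real
Gaussians of mean 0 and variance `1/2`), `(D₁, D₂)` the independent Gaussian estimation
error of variance `σ² = v > 0` per dimension, and SNR scalings `c_M, c_W > 0`, the
probability of a secrecy outage `P(γ̂_W < min(γ_M, γ_W))` is at most
`1/2 - (1/2)(1 + 2/σ²)^(-1/2)`. -/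
theorem secrecy_outage_probability_upper_bound
    {Ω : Type*} [MeasureSpace Ω] [IsProbabilityMeasure (ℙ : Measure Ω)]
    (H₁ H₂ M₁ M₂ D₁ D₂ : Ω → ℝ) (v : ℝ≥0) (hv : 0 < v) (cM cW : ℝ)
    (hcM : 0 < cM) (hcW : 0 < cW)
    (hH₁ : Measurable H₁) (hH₂ : Measurable H₂)
    (hM₁ : Measurable M₁) (hM₂ : Measurable M₂)
    (hD₁ : Measurable D₁) (hD₂ : Measurable D₂)
    (hindep : iIndepFun ![H₁, H₂, M₁, M₂, D₁, D₂] ℙ)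
    (hH₁d : Measure.map H₁ ℙ = gaussianReal 0 (1 / 2))
    (hH₂d : Measure.map H₂ ℙ = gaussianReal 0 (1 / 2))
    (hM₁d : Measure.map M₁ ℙ = gaussianReal 0 (1 / 2))
    (hM₂d : Measure.map M₂ ℙ = gaussianReal 0 (1 / 2))
    (hD₁d : Measure.map D₁ ℙ = gaussianReal 0 v)
    (hD₂d : Measure.map D₂ ℙ = gaussianReal 0 v) :
    ℙ {ω | cW * ((H₁ ω + D₁ ω) ^ 2 + (H₂ ω + D₂ ω) ^ 2)
            < min (cM * (M₁ ω ^ 2 + M₂ ω ^ 2)) (cW * (H₁ ω ^ 2 + H₂ ω ^ 2))}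
      ≤ ENNReal.ofReal
          (1 / 2 - 1 / 2 * (1 + 2 / (v : ℝ)) ^ (-(1 : ℝ) / 2)) :=
  secrecy_outage_probability_upper_bound_general H₁ H₂ M₁ M₂ D₁ D₂ v hv cM cW hcW hH₁ hH₂ hM₁ hM₂
    hD₁ hD₂ hindep hH₁d hH₂d hD₁d hD₂d
end
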